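/- arXiv:cs/0509062 — 7 statements merged into one kernel-verified Lean document; each statement's English description precedes it below -/
import Mathlib

section
/- Let j ≤ k be positive integers with k even and k ≥ 2. Then for all a ∈ [1/2, 1), w^{ub}(a) ≤ w^{ub}(1-a). -/
/-- Binary entropy function with natural logarithms (`Real.log 0 = 0` gives `H 0 = H 1 = 0`). -/
noncomputable def H (a : ℝ) : ℝ := -a * Real.log a - (1 - a) * Real.log (1 - a)

/-- Asymptotic growth rate of the average weight distribution of Gallager's
`(n, j, k)` LDPC ensemble. -/
noncomputable def wo (j k : ℕ) (a : ℝ) : ℝ :=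
  ((j : ℝ) / k) *
    sInf {y : ℝ | ∃ x : ℝ, 0 < x ∧
      y = Real.log (((1 + x) ^ k + (1 - x) ^ k) / (2 * x ^ (a * (k : ℝ))))} -
  ((j : ℝ) - 1) * H a

/-- Upper bound on the asymptotic growth rate of the average weight distribution of the
LDPC-GM ensemble (outer Gallager `(n, j, k)` LDPC code, inner rate-1 `(k, k)` regular
LDGM code). -/
noncomputable def wub (j k : ℕ) (a : ℝ) : ℝ :=
  H a + sSup {y : ℝ | ∃ b : ℝ, b ∈ Set.Icc (a / k) (1 - a / k) ∧
    y = wo j k b + a * Real.log (1 - (1 - 2 * b) ^ k)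
        + (1 - a) * Real.log (1 + (1 - 2 * b) ^ k) - Real.log 2}

/-!
Since `H` is symmetric, only the suprema need comparing. For `a ≥ 1/2` the range of `b` for `a`
lies inside the one for `1 - a`, and on it the objective for `a` is pointwise dominated by the one
for `1 - a`: for even `k`, `t = (1 - 2b)^k ∈ [0, 1]` gives `log (1 - t) ≤ log (1 + t)`, and
`a ≥ 1 - a`. The latter supremum is finite because the infimum in `wo` is at most its value at
`x = 1`.
-/

open Real Set

noncomputable def wubObjective (j k : ℕ) (a b : ℝ) : ℝ :=
  wo j k b + a * log (1 - (1 - 2 * b) ^ k) + (1 - a) * log (1 + (1 - 2 * b) ^ k) - log 2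

lemma wub_eq_sSup_image (j k : ℕ) (a : ℝ) :
    wub j k a = H a + sSup (wubObjective j k a '' Icc (a / k) (1 - a / k)) := by
  simp only [wub, wubObjective, image, eq_comm]

lemma H_eq_binEntropy (a : ℝ) : H a = binEntropy a := by
  simp only [H, binEntropy, log_inv]
  ring

lemma sInf_le_of_mem_of_nonneg {s : Set ℝ} {y : ℝ} (hy : y ∈ s) (hy0 : 0 ≤ y) : sInf s ≤ y := by
  by_cases hs : BddBelow s
  · exact csInf_le hs hy
  · rwa [Real.sInf_of_not_bddBelow hs]

lemma log_le_log_two_of_mem_Icc {x : ℝ} (hx : x ∈ Icc 0 2) : log x ≤ log 2 := by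
  rcases hx.1.eq_or_lt with rfl | hx0
  · simp [log_nonneg]
  · exact log_le_log hx0 hx.2

lemma abs_one_sub_two_mul_pow_le_one (k : ℕ) {b : ℝ} (hb : b ∈ Icc 0 1) :
    |(1 - 2 * b) ^ k| ≤ 1 := by
  rw [abs_pow]
  exact pow_le_one₀ (abs_nonneg _) (abs_le.mpr ⟨by linarith [hb.2], by linarith [hb.1]⟩)

lemma wo_le (j : ℕ) {k : ℕ} (hk : 0 < k) {b : ℝ} (hb : b ∈ Icc 0 1) :
    wo j k b ≤ j / k * log (2 ^ k / 2) + log 2 := by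
  have h2k : (2 : ℝ) ≤ 2 ^ k := by simpa using pow_le_pow_right₀ (by norm_num : (1 : ℝ) ≤ 2) hk
  have hinf : sInf {y : ℝ | ∃ x : ℝ, 0 < x ∧
      y = log (((1 + x) ^ k + (1 - x) ^ k) / (2 * x ^ (b * (k : ℝ))))} ≤ log (2 ^ k / 2) := by
    refine sInf_le_of_mem_of_nonneg ⟨1, one_pos, ?_⟩ (log_nonneg ?_)
    · norm_num [zero_pow hk.ne']
    · rw [le_div_iff₀ two_pos]
      linarith
  have hH0 : 0 ≤ H b := H_eq_binEntropy b ▸ binEntropy_nonneg hb.1 hb.2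
  have hH2 : H b ≤ log 2 := H_eq_binEntropy b ▸ binEntropy_le_log_two
  have hj : (0 : ℝ) ≤ j := j.cast_nonneg
  unfold wo
  nlinarith [mul_le_mul_of_nonneg_left hinf (by positivity : (0 : ℝ) ≤ j / k)]

lemma wubObjective_le (j : ℕ) {k : ℕ} (hk : 0 < k) {a b : ℝ} (ha : a ∈ Icc 0 1)
    (hb : b ∈ Icc 0 1) : wubObjective j k a b ≤ j / k * log (2 ^ k / 2) + log 2 := by
  have ht := abs_le.mp (abs_one_sub_two_mul_pow_le_one k hb)
  have h1 := log_le_log_two_of_mem_Icc (x := 1 - (1 - 2 * b) ^ k) ⟨by linarith, by linarith⟩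
  have h2 := log_le_log_two_of_mem_Icc (x := 1 + (1 - 2 * b) ^ k) ⟨by linarith, by linarith⟩
  have := wo_le j hk hb
  unfold wubObjective
  nlinarith [ha.1, ha.2]

lemma wubObjective_le_one_sub (j : ℕ) {k : ℕ} (hk : Even k) {a b : ℝ} (ha : 1 / 2 ≤ a)
    (hb : b ∈ Icc 0 1) : wubObjective j k a b ≤ wubObjective j k (1 - a) b := by
  have ht0 : 0 ≤ (1 - 2 * b) ^ k := hk.pow_nonneg _
  have ht1 := (abs_le.mp (abs_one_sub_two_mul_pow_le_one k hb)).2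
  have hlog : log (1 - (1 - 2 * b) ^ k) ≤ log (1 + (1 - 2 * b) ^ k) :=
    (log_nonpos (by linarith) (by linarith)).trans (log_nonneg (by linarith))
  unfold wubObjective
  nlinarith [mul_le_mul_of_nonneg_left hlog (by linarith : (0 : ℝ) ≤ 2 * a - 1)]

lemma Icc_div_subset_Icc_div {c d r : ℝ} (hcd : c ≤ d) (hr : 0 ≤ r) :
    Icc (d / r) (1 - d / r) ⊆ Icc (c / r) (1 - c / r) := by
  have := div_le_div_of_nonneg_right hcd hr
  exact Icc_subset_Icc (by linarith) (by linarith)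

lemma Icc_div_subset_Icc_zero_one {c r : ℝ} (hc : 0 ≤ c) (hr : 0 ≤ r) :
    Icc (c / r) (1 - c / r) ⊆ Icc 0 1 := by
  have := div_nonneg hc hr
  exact Icc_subset_Icc (by linarith) (by linarith)

theorem stmt2_general (j k : ℕ) (hke : Even k) (hk2 : 2 ≤ k)
    (a : ℝ) (ha : a ∈ Set.Ico (1 / 2 : ℝ) 1) :
    wub j k a ≤ wub j k (1 - a) := by
  obtain ⟨ha1, ha2⟩ := ha
  have hk : (2 : ℝ) ≤ k := by exact_mod_cast hk2
  have hsub : Icc (a / k) (1 - a / k) ⊆ Icc ((1 - a) / k) (1 - (1 - a) / k) :=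
    Icc_div_subset_Icc_div (by linarith) (by positivity)
  have hunit : Icc ((1 - a) / k) (1 - (1 - a) / k) ⊆ Icc 0 1 :=
    Icc_div_subset_Icc_zero_one (by linarith) (by positivity)
  have hne : (Icc (a / k) (1 - a / k)).Nonempty := by
    refine nonempty_Icc.mpr ?_
    have : a / k ≤ a / 2 := div_le_div_of_nonneg_left (by linarith) two_pos hk
    linarith
  have hbdd : BddAbove (wubObjective j k (1 - a) '' Icc ((1 - a) / k) (1 - (1 - a) / k)) := by
    refine ⟨j / k * log (2 ^ k / 2) + log 2, forall_mem_image.mpr fun b hb => ?_⟩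
    exact wubObjective_le j (by omega) ⟨by linarith, by linarith⟩ (hunit hb)
  rw [wub_eq_sSup_image, wub_eq_sSup_image, H_eq_binEntropy,
    H_eq_binEntropy, binEntropy_one_sub, add_le_add_iff_left]
  refine csSup_le (hne.image _) (forall_mem_image.mpr fun b hb => ?_)
  exact le_csSup_of_le hbdd (mem_image_of_mem _ (hsub hb))
    (wubObjective_le_one_sub j hke ha1 (hunit (hsub hb)))

theorem stmt2 (j k : ℕ) (hj : 0 < j) (hjk : j ≤ k) (hke : Even k) (hk2 : 2 ≤ k)
    (a : ℝ) (ha : a ∈ Set.Ico (1 / 2 : ℝ) 1) :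
    wub j k a ≤ wub j k (1 - a) :=
  stmt2_general j k hke hk2 a ha
end

section
/- For every δ ∈ (0, 1/2) there exists a positive integer M such that for every even integer k ≥ M and every b ∈ [δ, 1-δ]: H(b) + 2·ln(1 + (1-2b)^k) ≤ ln 2. (Equivalently, for k large enough the maximum of H(b) + 2·ln(1+(1-2b)^k) over [δ, 1-δ] is attained at b = 1/2, where its value is ln 2.) -/
private lemma log_ge_two_sub (x : ℝ) (hx : 0 < x) : 2 - 2 / Real.sqrt x ≤ Real.log x := by
  have hs : 0 < Real.sqrt x := Real.sqrt_pos.2 hx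
  have h1 : Real.log (1 / Real.sqrt x) ≤ 1 / Real.sqrt x - 1 :=
    Real.log_le_sub_one_of_pos (by positivity)
  rw [Real.log_div one_ne_zero (ne_of_gt hs), Real.log_one, Real.log_sqrt hx.le] at h1
  have h2 : 2 / Real.sqrt x = 2 * (1 / Real.sqrt x) := by ring
  linarith

private lemma sqrt_sum_le (t : ℝ) (h1 : -1 ≤ t) (h2 : t ≤ 1) :
    Real.sqrt (1 + t) + Real.sqrt (1 - t) ≤ 2 - t ^ 2 / 4 := by
  have ha : (0:ℝ) ≤ 1 + t := by linarith
  have hb : (0:ℝ) ≤ 1 - t := by linarith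
  set a := Real.sqrt (1 + t)
  set b := Real.sqrt (1 - t)
  have ha0 : 0 ≤ a := Real.sqrt_nonneg _
  have hb0 : 0 ≤ b := Real.sqrt_nonneg _
  have ha2 : a ^ 2 = 1 + t := Real.sq_sqrt ha
  have hb2 : b ^ 2 = 1 - t := Real.sq_sqrt hb
  have hab : a * b = Real.sqrt ((1 + t) * (1 - t)) := (Real.sqrt_mul ha _).symm
  have hab2 : a * b ≤ 1 - t ^ 2 / 2 := by
    rw [hab]
    have : (1 + t) * (1 - t) ≤ (1 - t ^ 2 / 2) ^ 2 := by nlinarith [sq_nonneg t]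
    calc Real.sqrt ((1 + t) * (1 - t)) ≤ Real.sqrt ((1 - t ^ 2 / 2) ^ 2) :=
          Real.sqrt_le_sqrt this
      _ = 1 - t ^ 2 / 2 := Real.sqrt_sq (by nlinarith [sq_nonneg t])
  nlinarith [sq_nonneg (a + b), sq_nonneg t]

/-- Pinsker-type bound on binary entropy. -/
private lemma entropy_le (b : ℝ) (hb0 : 0 < b) (hb1 : b < 1) :
    H b + (2 * b - 1) ^ 2 / 4 ≤ Real.log 2 := by
  have h1b : 0 < 1 - b := by linarith
  have key1 : 2 - 2 / Real.sqrt (2 * b) ≤ Real.log (2 * b) := log_ge_two_sub _ (by linarith)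
  have key2 : 2 - 2 / Real.sqrt (2 * (1 - b)) ≤ Real.log (2 * (1 - b)) :=
    log_ge_two_sub _ (by linarith)
  have e1 : Real.log (2 * b) = Real.log 2 + Real.log b := Real.log_mul two_ne_zero hb0.ne'
  have e2 : Real.log (2 * (1 - b)) = Real.log 2 + Real.log (1 - b) :=
    Real.log_mul two_ne_zero h1b.ne'
  -- b * log(2b) ≥ 2b - sqrt(2b), (1-b) * log(2(1-b)) ≥ 2(1-b) - sqrt(2(1-b))
  have s1 : b * (2 / Real.sqrt (2 * b)) = Real.sqrt (2 * b) := by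
    have hs : 0 < Real.sqrt (2 * b) := Real.sqrt_pos.2 (by linarith)
    have : Real.sqrt (2 * b) * Real.sqrt (2 * b) = 2 * b :=
      Real.mul_self_sqrt (by linarith)
    rw [show b * (2 / Real.sqrt (2 * b)) = (2 * b) / Real.sqrt (2 * b) by ring,
      div_eq_iff hs.ne']
    linarith
  have s2 : (1 - b) * (2 / Real.sqrt (2 * (1 - b))) = Real.sqrt (2 * (1 - b)) := by
    have hs : 0 < Real.sqrt (2 * (1 - b)) := Real.sqrt_pos.2 (by linarith)
    have : Real.sqrt (2 * (1 - b)) * Real.sqrt (2 * (1 - b)) = 2 * (1 - b) :=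
      Real.mul_self_sqrt (by linarith)
    rw [show (1 - b) * (2 / Real.sqrt (2 * (1 - b))) = (2 * (1 - b)) / Real.sqrt (2 * (1 - b)) by ring,
      div_eq_iff hs.ne']
    linarith
  have m1 : b * (2 - 2 / Real.sqrt (2 * b)) ≤ b * Real.log (2 * b) :=
    mul_le_mul_of_nonneg_left key1 hb0.le
  have m2 : (1 - b) * (2 - 2 / Real.sqrt (2 * (1 - b))) ≤ (1 - b) * Real.log (2 * (1 - b)) :=
    mul_le_mul_of_nonneg_left key2 h1b.le
  have sq : Real.sqrt (2 * b) + Real.sqrt (2 * (1 - b)) ≤ 2 - (2 * b - 1) ^ 2 / 4 := by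
    have := sqrt_sum_le (2 * b - 1) (by linarith) (by linarith)
    have e3 : 1 + (2 * b - 1) = 2 * b := by ring
    have e4 : 1 - (2 * b - 1) = 2 * (1 - b) := by ring
    rw [e3, e4] at this
    linarith [this]
  rw [e1] at m1; rw [e2] at m2
  have hH : H b = -b * Real.log b - (1 - b) * Real.log (1 - b) := rfl
  nlinarith [m1, m2, sq, s1, s2]

theorem stmt3 (δ : ℝ) (hδ : δ ∈ Set.Ioo (0 : ℝ) (1 / 2)) :
    ∃ M : ℕ, 0 < M ∧ ∀ k : ℕ, Even k → M ≤ k →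
      ∀ b ∈ Set.Icc δ (1 - δ),
        H b + 2 * Real.log (1 + (1 - 2 * b) ^ k) ≤ Real.log 2 := by
  obtain ⟨hδ0, hδ2⟩ := hδ
  have hq0 : (0:ℝ) ≤ 1 - 2 * δ := by linarith
  have hq1 : 1 - 2 * δ < 1 := by linarith
  obtain ⟨n, hn⟩ : ∃ n : ℕ, (1 - 2 * δ) ^ n < 1/8 :=
    exists_pow_lt_of_lt_one (by norm_num) hq1
  refine ⟨n + 2, by positivity, ?_⟩
  intro k hke hkM b hb
  obtain ⟨hbl, hbr⟩ := hb
  have hb0 : 0 < b := lt_of_lt_of_le hδ0 hbl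
  have hb1 : b < 1 := by linarith
  -- |1 - 2b| ≤ 1 - 2δ
  have habs : |1 - 2 * b| ≤ 1 - 2 * δ := by
    rw [abs_le]; constructor <;> linarith
  have habs0 : 0 ≤ |1 - 2 * b| := abs_nonneg _
  -- (1-2b)^k = |1-2b|^k since k even
  have hpow : (1 - 2 * b) ^ k = |1 - 2 * b| ^ k := (hke.pow_abs _).symm
  -- |1-2b|^k ≤ |1-2b|^2 * (1-2δ)^(k-2) ≤ (2b-1)^2 * (1/8)
  have hk2 : 2 ≤ k := le_trans (by omega) hkM
  have hsplit : |1 - 2 * b| ^ k = |1 - 2 * b| ^ 2 * |1 - 2 * b| ^ (k - 2) := by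
    rw [← pow_add]; congr 1; omega
  have hstep : |1 - 2 * b| ^ (k - 2) ≤ (1 - 2 * δ) ^ (k - 2) :=
    pow_le_pow_left₀ habs0 habs _
  have hstep2 : (1 - 2 * δ) ^ (k - 2) ≤ (1 - 2 * δ) ^ n := by
    apply pow_le_pow_of_le_one hq0 hq1.le
    omega
  have hbound : (1 - 2 * b) ^ k ≤ (2 * b - 1) ^ 2 / 8 := by
    rw [hpow, hsplit]
    have h2 : |1 - 2 * b| ^ 2 = (2 * b - 1) ^ 2 := by
      rw [sq_abs]; ring
    rw [h2]
    have : |1 - 2 * b| ^ (k - 2) ≤ 1/8 := le_trans hstep (le_trans hstep2 hn.le)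
    nlinarith [mul_le_mul_of_nonneg_left this (sq_nonneg (2 * b - 1))]
  have hknn : 0 ≤ (1 - 2 * b) ^ k := hpow ▸ pow_nonneg habs0 k
  have hlog : Real.log (1 + (1 - 2 * b) ^ k) ≤ (1 - 2 * b) ^ k := by
    have := Real.log_le_sub_one_of_pos (x := 1 + (1 - 2 * b) ^ k) (by linarith)
    linarith
  have hent := entropy_le b hb0 hb1
  nlinarith [hlog, hbound, hent, hknn]
end

section
/- Let p ≠ 1 and q be real numbers and let λ, λ̃, ρ : ℝ → ℝ be arbitrary functions. Define F(x) := ((1-p)x + p)², f(x) := (1-p)x + p, and q' := 1 - (1-q)(1-p). Suppose real numbers x₁, x₂, x₃, x₄ satisfy x₁ = 1 - (1-q)(1-x₄), x₂ = F(x₁)·λ(x₃), x₃ = 1 - ρ(1-x₂), x₄ = f(x₁)·λ̃(x₃), and that (1-q)(1-p)·λ̃(x₃) ≠ 1. Then x₃ = 1 - ρ( 1 - ( q'/(1-(1-q')·λ̃(x₃)) )² · λ(x₃) ); that is, the fixed-point equation of the LDPC-GM ensemble with inner irregular LDGM degree distributions F (input nodes) and G(x) = x² (check nodes) on the BEC with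 erasure probability q coincides with that of the ensemble with inner (2,2) regular LDGM code on the BEC with erasure probability q' = q(1-p)+p. -/
theorem stmt7 (p q : ℝ) (hp : p ≠ 1) (lam lamT rho : ℝ → ℝ) (x1 x2 x3 x4 : ℝ)
    (h1 : x1 = 1 - (1 - q) * (1 - x4))
    (h2 : x2 = ((1 - p) * x1 + p) ^ 2 * lam x3)
    (h3 : x3 = 1 - rho (1 - x2))
    (h4 : x4 = ((1 - p) * x1 + p) * lamT x3)
    (hne : (1 - q) * (1 - p) * lamT x3 ≠ 1) :
    x3 = 1 - rho (1 -
      ((1 - (1 - q) * (1 - p)) / (1 - (1 - (1 - (1 - q) * (1 - p))) * lamT x3)) ^ 2 * lam x3) := by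
  have hd : 1 - (1 - (1 - (1 - q) * (1 - p))) * lamT x3 ≠ 0 := by
    intro h; apply hne; linarith
  have hu : (1 - p) * x1 + p =
      (1 - (1 - q) * (1 - p)) / (1 - (1 - (1 - (1 - q) * (1 - p))) * lamT x3) := by
    rw [eq_div_iff hd]
    subst h4
    linear_combination (1 - p) * h1
  have hx2 : x2 = ((1 - (1 - q) * (1 - p)) /
      (1 - (1 - (1 - (1 - q) * (1 - p))) * lamT x3)) ^ 2 * lam x3 := by
    rw [h2, hu]
  rw [← hx2]; exact h3
end

section
/- Let q ∈ (0,1). Let λ : ℝ → ℝ be continuous and nonnegative on [0,1] with λ(0) = 0, λ(1) = 1 and L := ∫₀¹ λ(t)dt > 0, and set λ̃(x) := (∫₀ˣ λ(t)dt)/L. Let ρ : ℝ → ℝ be continuous on [0,1]. If for every x ∈ [0,1] the fixed-point equation 1 - ρ( 1 - ( q/(1-(1-q)·λ̃(x)) )²·λ(x) ) = x holds, then ∫₀¹ ρ(t)dt = q·∫₀¹ λ(t)dt; equivalently, the design rate R := 1 - (∫₀¹ ρ(t)dt)/(∫₀¹ λ(t)dt) equals 1 - q. -/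
/-!
Put `g x = 1 - (q / (1 - (1 - q) λ̃ x))² λ x`. The fixed-point equation says that `1 - ρ` is a left
inverse of `g` on `[0, 1]`. As `g` is continuous with `g 0 = 1` and `g 1 = 0`, it is a decreasing
bijection of `[0, 1]` with inverse `1 - ρ`, and the regions under the two graphs are mirror images
in the diagonal, so `∫₀¹ g = 1 - ∫₀¹ ρ`. On the other hand `λ = L λ̃'`, so
`(q / (1 - (1 - q) λ̃))² λ` is the derivative of `q² L / ((1 - q) (1 - (1 - q) λ̃))`, and
`∫₀¹ g = 1 - q L`.
-/

open MeasureTheory Set intervalIntegral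

section InverseFunction

variable {f g : ℝ → ℝ} {a b : ℝ}

theorem setIntegral_Ioc_eq_of_lt_iff_lt (hf : IntegrableOn f (Ioc 0 a))
    (hg : IntegrableOn g (Ioc 0 b)) (hf_mem : MapsTo f (Ioc 0 a) (Icc 0 b))
    (hg_mem : MapsTo g (Ioc 0 b) (Icc 0 a))
    (hfg : ∀ x ∈ Ioc 0 a, ∀ y ∈ Ioc 0 b, y < f x ↔ x < g y) :
    ∫ x in Ioc 0 a, f x = ∫ y in Ioc 0 b, g y := by
  have hswap : Prod.swap ⁻¹' regionBetween (fun _ => 0) g (Ioc 0 b) =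
      regionBetween (fun _ => 0) f (Ioc 0 a) := by
    ext ⟨x, y⟩
    simp only [regionBetween, mem_preimage, Prod.swap_prod_mk, mem_ofPred_eq, mem_Ioo]
    constructor
    · rintro ⟨hy, hx0, hxg⟩
      have hx : x ∈ Ioc 0 a := ⟨hx0, hxg.le.trans (hg_mem hy).2⟩
      exact ⟨hx, hy.1, (hfg x hx y hy).2 hxg⟩
    · rintro ⟨hx, hy0, hyf⟩
      have hy : y ∈ Ioc 0 b := ⟨hy0, hyf.le.trans (hf_mem hx).2⟩
      exact ⟨hy, hx.1, (hfg x hx y hy).1 hyf⟩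
  have hvol : volume (regionBetween (fun _ => 0) f (Ioc 0 a)) =
      volume (regionBetween (fun _ => 0) g (Ioc 0 b)) := by
    rw [← hswap, Measure.volume_eq_prod]
    exact Measure.measurePreserving_swap.measure_preimage_emb
      MeasurableEquiv.prodComm.measurableEmbedding _
  rw [Measure.volume_eq_prod,
    volume_regionBetween_eq_integral integrableOn_zero hf measurableSet_Ioc
      (fun x hx => (hf_mem hx).1),
    volume_regionBetween_eq_integral integrableOn_zero hg measurableSet_Ioc
      (fun y hy => (hg_mem hy).1)] at hvol
  simp only [Pi.sub_apply, sub_zero] at hvol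
  exact (ENNReal.ofReal_eq_ofReal_iff
    (setIntegral_nonneg measurableSet_Ioc fun x hx => (hf_mem hx).1)
    (setIntegral_nonneg measurableSet_Ioc fun y hy => (hg_mem hy).1)).1 hvol

theorem integral_eq_integral_of_leftInvOn (ha : 0 ≤ a) (hb : 0 ≤ b)
    (hf : ContinuousOn f (Icc 0 a)) (hf0 : f 0 = b) (hfa : f a = 0)
    (hgf : LeftInvOn g f (Icc 0 a)) :
    ∫ x in 0..a, f x = ∫ y in 0..b, g y := by
  have hanti : StrictAntiOn f (Icc 0 a) :=
    hf.strictAntiOn_of_injOn_Icc ha (by rwa [hf0, hfa]) hgf.injOn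
  have hf_mem : MapsTo f (Icc 0 a) (Icc 0 b) := fun x hx =>
    ⟨hfa ▸ hanti.antitoneOn hx ⟨ha, le_rfl⟩ hx.2, hf0 ▸ hanti.antitoneOn ⟨le_rfl, ha⟩ hx hx.1⟩
  have hsurj : SurjOn f (Icc 0 a) (Icc 0 b) := by
    have := intermediate_value_Icc' ha hf
    rwa [hf0, hfa] at this
  have hg_mem : MapsTo g (Icc 0 b) (Icc 0 a) := by
    intro y hy
    obtain ⟨x, hx, rfl⟩ := hsurj hy
    rwa [hgf hx]
  have hfg : ∀ x ∈ Icc 0 a, ∀ y ∈ Icc 0 b, y < f x ↔ x < g y := by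
    intro x hx y hy
    obtain ⟨x', hx', rfl⟩ := hsurj hy
    rw [hgf hx', hanti.lt_iff_gt hx' hx]
  have hg_anti : AntitoneOn g (Icc 0 b) := by
    intro y hy y' hy' hyy'
    obtain ⟨x, hx, rfl⟩ := hsurj hy
    obtain ⟨x', hx', rfl⟩ := hsurj hy'
    rw [hgf hx, hgf hx']
    exact (hanti.le_iff_ge hx hx').1 hyy'
  rw [integral_of_le ha, integral_of_le hb]
  exact setIntegral_Ioc_eq_of_lt_iff_lt
    ((hf.integrableOn_Icc).mono_set Ioc_subset_Icc_self)
    ((hg_anti.integrableOn_isCompact isCompact_Icc).mono_set Ioc_subset_Icc_self)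
    (hf_mem.mono_left Ioc_subset_Icc_self) (hg_mem.mono_left Ioc_subset_Icc_self)
    fun x hx y hy => hfg x (Ioc_subset_Icc_self hx) y (Ioc_subset_Icc_self hy)

end InverseFunction

theorem integral_deriv_div_sq {φ φ' : ℝ → ℝ} {a b : ℝ} (hab : a ≤ b)
    (hφ : ContinuousOn φ (Icc a b)) (hφ0 : ∀ x ∈ Icc a b, φ x ≠ 0)
    (hderiv : ∀ x ∈ Ioo a b, HasDerivAt φ (φ' x) x)
    (hint : IntervalIntegrable (fun x => φ' x / φ x ^ 2) volume a b) :
    ∫ x in a..b, φ' x / φ x ^ 2 = (φ a)⁻¹ - (φ b)⁻¹ := by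
  have hprim : ∀ x ∈ Ioo a b, HasDerivAt (-φ⁻¹) (φ' x / φ x ^ 2) x := fun x hx => by
    simpa only [neg_div, neg_neg] using
      ((hderiv x hx).inv (hφ0 x (Ioo_subset_Icc_self hx))).neg
  rw [integral_eq_sub_of_hasDerivAt_of_le hab (hφ.inv₀ hφ0).neg hprim hint, Pi.neg_apply,
    Pi.neg_apply, Pi.inv_apply, Pi.inv_apply]
  ring

noncomputable def nodeDegreeDist (lam : ℝ → ℝ) (x : ℝ) : ℝ :=
  (∫ t in (0 : ℝ)..x, lam t) / ∫ t in (0 : ℝ)..1, lam t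

noncomputable def fixedPointTerm (q : ℝ) (lam : ℝ → ℝ) (x : ℝ) : ℝ :=
  (q / (1 - (1 - q) * nodeDegreeDist lam x)) ^ 2 * lam x

section NodeDegreeDist

variable {lam : ℝ → ℝ} {q : ℝ}

theorem nodeDegreeDist_one (hL : ∫ t in (0 : ℝ)..1, lam t ≠ 0) : nodeDegreeDist lam 1 = 1 :=
  div_self hL

theorem nodeDegreeDist_mem_Icc (hlam : ContinuousOn lam (Icc 0 1))
    (hnonneg : ∀ x ∈ Icc (0 : ℝ) 1, 0 ≤ lam x) (hL : 0 < ∫ t in (0 : ℝ)..1, lam t)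
    {x : ℝ} (hx : x ∈ Icc 0 1) : nodeDegreeDist lam x ∈ Icc 0 1 := by
  have hnonneg_ae : 0 ≤ᵐ[volume.restrict (Ioc 0 1)] lam :=
    (ae_restrict_iff' measurableSet_Ioc).2 <|
      .of_forall fun t ht => hnonneg t (Ioc_subset_Icc_self ht)
  refine ⟨div_nonneg ?_ hL.le, (div_le_one hL).2 ?_⟩
  · exact integral_nonneg hx.1 fun t ht => hnonneg t ⟨ht.1, ht.2.trans hx.2⟩
  · exact integral_mono_interval le_rfl hx.1 hx.2 hnonneg_ae
      (hlam.intervalIntegrable_of_Icc zero_le_one)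

theorem continuousOn_nodeDegreeDist (hlam : ContinuousOn lam (Icc 0 1)) :
    ContinuousOn (nodeDegreeDist lam) (Icc 0 1) := by
  have := continuousOn_primitive_interval (a := (0 : ℝ)) (b := 1) (μ := volume) (f := lam)
    (by rw [uIcc_of_le zero_le_one]; exact hlam.integrableOn_Icc)
  rw [uIcc_of_le zero_le_one] at this
  exact this.div_const _

theorem hasDerivAt_nodeDegreeDist (hlam : ContinuousOn lam (Icc 0 1)) {x : ℝ}
    (hx : x ∈ Ioo 0 1) :
    HasDerivAt (nodeDegreeDist lam) (lam x / ∫ t in (0 : ℝ)..1, lam t) x := by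
  have hlam' : ContinuousOn lam (Ioo 0 1) := hlam.mono Ioo_subset_Icc_self
  refine (integral_hasDerivAt_right ?_ (hlam'.stronglyMeasurableAtFilter isOpen_Ioo x hx)
    (hlam'.continuousAt (isOpen_Ioo.mem_nhds hx))).div_const _
  exact (hlam.mono (Icc_subset_Icc le_rfl hx.2.le)).intervalIntegrable_of_Icc hx.1.le

theorem le_one_sub_mul_nodeDegreeDist (hq : q ≤ 1) (hlam : ContinuousOn lam (Icc 0 1))
    (hnonneg : ∀ x ∈ Icc (0 : ℝ) 1, 0 ≤ lam x) (hL : 0 < ∫ t in (0 : ℝ)..1, lam t)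
    {x : ℝ} (hx : x ∈ Icc 0 1) : q ≤ 1 - (1 - q) * nodeDegreeDist lam x := by
  have := nodeDegreeDist_mem_Icc hlam hnonneg hL hx
  nlinarith [this.1, this.2]

theorem continuousOn_fixedPointTerm (hq : q ∈ Ioo 0 1) (hlam : ContinuousOn lam (Icc 0 1))
    (hnonneg : ∀ x ∈ Icc (0 : ℝ) 1, 0 ≤ lam x) (hL : 0 < ∫ t in (0 : ℝ)..1, lam t) :
    ContinuousOn (fixedPointTerm q lam) (Icc 0 1) := by
  have hden : ContinuousOn (fun x => 1 - (1 - q) * nodeDegreeDist lam x) (Icc 0 1) :=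
    continuousOn_const.sub (continuousOn_const.mul (continuousOn_nodeDegreeDist hlam))
  refine ((continuousOn_const.div hden fun x hx => ?_).pow 2).mul hlam
  exact (hq.1.trans_le (le_one_sub_mul_nodeDegreeDist hq.2.le hlam hnonneg hL hx)).ne'

theorem integral_fixedPointTerm (hq : q ∈ Ioo 0 1) (hlam : ContinuousOn lam (Icc 0 1))
    (hnonneg : ∀ x ∈ Icc (0 : ℝ) 1, 0 ≤ lam x) (hL : 0 < ∫ t in (0 : ℝ)..1, lam t) :
    ∫ x in (0 : ℝ)..1, fixedPointTerm q lam x = q * ∫ t in (0 : ℝ)..1, lam t := by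
  set L := ∫ t in (0 : ℝ)..1, lam t
  set φ : ℝ → ℝ := fun x => 1 - (1 - q) * nodeDegreeDist lam x
  set φ' : ℝ → ℝ := fun x => -((1 - q) * (lam x / L))
  have hq1 : 1 - q ≠ 0 := (sub_pos.2 hq.2).ne'
  have hφ : ContinuousOn φ (Icc 0 1) :=
    continuousOn_const.sub (continuousOn_const.mul (continuousOn_nodeDegreeDist hlam))
  have hφ_pos : ∀ x ∈ Icc (0 : ℝ) 1, 0 < φ x := fun x hx =>
    hq.1.trans_le (le_one_sub_mul_nodeDegreeDist hq.2.le hlam hnonneg hL hx)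
  have hterm : fixedPointTerm q lam = fun x => -(q ^ 2 * L / (1 - q)) * (φ' x / φ x ^ 2) := by
    funext x
    simp only [fixedPointTerm, φ, φ']
    field_simp
  have hint : IntervalIntegrable (fun x => φ' x / φ x ^ 2) volume 0 1 :=
    ((continuousOn_const.mul (hlam.div_const L)).neg.div (hφ.pow 2) fun x hx =>
      pow_ne_zero 2 (hφ_pos x hx).ne').intervalIntegrable_of_Icc zero_le_one
  have hderiv : ∀ x ∈ Ioo (0 : ℝ) 1, HasDerivAt φ (φ' x) x := fun x hx => by
    simpa only [φ, φ', zero_sub] using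
      ((hasDerivAt_nodeDegreeDist hlam hx).const_mul (1 - q)).const_sub 1
  rw [hterm, intervalIntegral.integral_const_mul,
    integral_deriv_div_sq zero_le_one hφ (fun x hx => (hφ_pos x hx).ne') hderiv hint]
  have hφ0 : nodeDegreeDist lam 0 = 0 := by simp [nodeDegreeDist]
  simp only [φ, hφ0, nodeDegreeDist_one hL.ne']
  field_simp [hq.1.ne']
  ring

end NodeDegreeDist

theorem stmt8 (q : ℝ) (hq : q ∈ Set.Ioo (0 : ℝ) 1)
    (lam rho : ℝ → ℝ)
    (hlamCont : ContinuousOn lam (Set.Icc 0 1))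
    (hlamNonneg : ∀ x ∈ Set.Icc (0 : ℝ) 1, 0 ≤ lam x)
    (hlam0 : lam 0 = 0) (hlam1 : lam 1 = 1)
    (hL : 0 < ∫ t in (0 : ℝ)..1, lam t)
    (hrhoCont : ContinuousOn rho (Set.Icc 0 1))
    (hfix : ∀ x ∈ Set.Icc (0 : ℝ) 1,
      1 - rho (1 -
        (q / (1 - (1 - q) * ((∫ t in (0 : ℝ)..x, lam t) / ∫ t in (0 : ℝ)..1, lam t))) ^ 2 *
          lam x) = x) :
    (∫ t in (0 : ℝ)..1, rho t) = q * ∫ t in (0 : ℝ)..1, lam t ∧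
      1 - (∫ t in (0 : ℝ)..1, rho t) / ∫ t in (0 : ℝ)..1, lam t = 1 - q := by
  set g : ℝ → ℝ := fun x => 1 - fixedPointTerm q lam x
  have hg : ContinuousOn g (Icc 0 1) :=
    continuousOn_const.sub (continuousOn_fixedPointTerm hq hlamCont hlamNonneg hL)
  have hg0 : g 0 = 1 := by simp [g, fixedPointTerm, hlam0]
  have hg1 : g 1 = 0 := by
    simp [g, fixedPointTerm, hlam1, nodeDegreeDist_one hL.ne', hq.1.ne']
  have harea : ∫ x in (0 : ℝ)..1, g x = ∫ y in (0 : ℝ)..1, (1 - rho y) :=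
    integral_eq_integral_of_leftInvOn zero_le_one zero_le_one hg hg0 hg1 hfix
  have hrho : (∫ t in (0 : ℝ)..1, rho t) = q * ∫ t in (0 : ℝ)..1, lam t := by
    rw [integral_sub intervalIntegrable_const (hrhoCont.intervalIntegrable_of_Icc zero_le_one),
      integral_sub intervalIntegrable_const
        ((continuousOn_fixedPointTerm hq hlamCont hlamNonneg hL).intervalIntegrable_of_Icc
          zero_le_one),
      integral_fixedPointTerm hq hlamCont hlamNonneg hL] at harea
    simp only [intervalIntegral.integral_const, sub_zero, smul_eq_mul, mul_one] at harea
    linarith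
  refine ⟨hrho, ?_⟩
  rw [hrho, mul_div_assoc, div_self hL.ne', mul_one]
end

section
/- Let k ≥ 2 be an integer and q ∈ (0,1). Then for every x ∈ [0,1], ∫₀ˣ λ_q(t)dt = (D_q(x) - q) / (q·k·(1-q)·D_q(x)). -/
/-!
Differentiating `D_q` gives `D_q' = (1-q) k (1 - (1-x)^{1/(k-1)})`, so
`λ_q = D_q' / ((1-q) k D_q²)` has the antiderivative `-1 / ((1-q) k D_q)`. Since `D_q' ≥ 0`
on `[0,1]` and `D_q(0) = q > 0`, `D_q` stays positive there, and the fundamental theorem of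
calculus gives the closed form.
-/

/-- `D_q(x) = 1 - (1-q)(1 - kx + (k-1)(1 - (1-x)^{k/(k-1)}))`. -/
noncomputable def Dq (k : ℕ) (q x : ℝ) : ℝ :=
  1 - (1 - q) * (1 - k * x + ((k : ℝ) - 1) * (1 - (1 - x) ^ ((k : ℝ) / ((k : ℝ) - 1))))

/-- The check-regular variable degree distribution
`λ_q(x) = (1 - (1-x)^{1/(k-1)}) / D_q(x)²`. -/
noncomputable def lamq (k : ℕ) (q x : ℝ) : ℝ :=
  (1 - (1 - x) ^ (1 / ((k : ℝ) - 1))) / (Dq k q x) ^ 2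

open Set

lemma cast_sub_one_pos {k : ℕ} (hk : 2 ≤ k) : (0 : ℝ) < k - 1 := by
  have : (2 : ℝ) ≤ k := by exact_mod_cast hk
  linarith

lemma Dq_zero (k : ℕ) (q : ℝ) : Dq k q 0 = q := by
  simp [Dq]

lemma hasDerivAt_Dq (k : ℕ) (hk : 2 ≤ k) (q t : ℝ) :
    HasDerivAt (Dq k q) ((1 - q) * k * (1 - (1 - t) ^ (1 / ((k : ℝ) - 1)))) t := by
  have hk1 := cast_sub_one_pos hk
  have hexp : (k : ℝ) / (k - 1) - 1 = 1 / (k - 1) := by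
    field_simp
    ring
  have hpow : HasDerivAt (fun x : ℝ => (1 - x) ^ ((k : ℝ) / (k - 1)))
      (-1 * ((k : ℝ) / (k - 1)) * (1 - t) ^ (1 / ((k : ℝ) - 1))) t := by
    rw [← hexp]
    exact ((hasDerivAt_id t).const_sub 1).rpow_const
      (Or.inr ((le_div_iff₀ hk1).2 (by linarith)))
  unfold Dq
  refine ((((hasDerivAt_id t).const_mul (k : ℝ)).const_sub 1).add
    ((hpow.const_sub 1).const_mul ((k : ℝ) - 1))).const_mul (1 - q) |>.const_sub 1
    |>.congr_deriv ?_
  field_simp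
  ring

lemma differentiable_Dq (k : ℕ) (hk : 2 ≤ k) (q : ℝ) : Differentiable ℝ (Dq k q) :=
  fun t => (hasDerivAt_Dq k hk q t).differentiableAt

lemma monotoneOn_Dq (k : ℕ) (hk : 2 ≤ k) {q : ℝ} (hq : q ≤ 1) :
    MonotoneOn (Dq k q) (Icc 0 1) := by
  have hdiff := differentiable_Dq k hk q
  refine monotoneOn_of_deriv_nonneg (convex_Icc 0 1) hdiff.continuous.continuousOn
    hdiff.differentiableOn fun t ht => ?_
  rw [interior_Icc] at ht
  rw [(hasDerivAt_Dq k hk q t).deriv]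
  have hpow_le : (1 - t) ^ (1 / ((k : ℝ) - 1)) ≤ 1 :=
    Real.rpow_le_one (by linarith [ht.2]) (by linarith [ht.1])
      (one_div_nonneg.2 (cast_sub_one_pos hk).le)
  have hq' : 0 ≤ 1 - q := by linarith
  exact mul_nonneg (by positivity) (by linarith)

lemma le_Dq (k : ℕ) (hk : 2 ≤ k) {q t : ℝ} (hq : q ≤ 1) (ht : t ∈ Icc (0 : ℝ) 1) :
    q ≤ Dq k q t := by
  simpa only [Dq_zero] using
    monotoneOn_Dq k hk hq (left_mem_Icc.2 zero_le_one) ht ht.1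

lemma hasDerivAt_neg_inv_Dq (k : ℕ) (hk : 2 ≤ k) {q t : ℝ} (hq : q ≠ 1)
    (ht : Dq k q t ≠ 0) :
    HasDerivAt (fun s => -((1 - q) * k * Dq k q s)⁻¹) (lamq k q t) t := by
  have hk0 : (k : ℝ) ≠ 0 := by positivity
  have hq' : 1 - q ≠ 0 := sub_ne_zero.2 hq.symm
  refine (((hasDerivAt_Dq k hk q t).const_mul ((1 - q) * k)).inv
    (by positivity)).neg.congr_deriv ?_
  unfold lamq
  field_simp

lemma continuousOn_lamq (k : ℕ) (hk : 2 ≤ k) (q : ℝ) :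
    ContinuousOn (lamq k q) {t | Dq k q t ≠ 0} := by
  have hk1 : (0 : ℝ) ≤ 1 / ((k : ℝ) - 1) := one_div_nonneg.2 (cast_sub_one_pos hk).le
  have hnum : Continuous fun t : ℝ => 1 - (1 - t) ^ (1 / ((k : ℝ) - 1)) :=
    continuous_const.sub
      ((Real.continuous_rpow_const hk1).comp (continuous_const.sub continuous_id))
  exact hnum.continuousOn.div ((differentiable_Dq k hk q).continuous.pow 2).continuousOn
    fun t ht => pow_ne_zero 2 ht

theorem stmt9 (k : ℕ) (hk : 2 ≤ k) (q : ℝ) (hq : q ∈ Set.Ioo (0 : ℝ) 1)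
    (x : ℝ) (hx : x ∈ Set.Icc (0 : ℝ) 1) :
    (∫ t in (0 : ℝ)..x, lamq k q t)
      = (Dq k q x - q) / (q * k * (1 - q) * Dq k q x) := by
  obtain ⟨hq0, hq1⟩ := hq
  have hD_pos : ∀ t ∈ uIcc 0 x, 0 < Dq k q t := fun t ht => by
    rw [uIcc_of_le hx.1] at ht
    exact hq0.trans_le (le_Dq k hk hq1.le ⟨ht.1, ht.2.trans hx.2⟩)
  rw [intervalIntegral.integral_eq_sub_of_hasDerivAt
    (fun t ht => hasDerivAt_neg_inv_Dq k hk hq1.ne (hD_pos t ht).ne')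
    ((continuousOn_lamq k hk q).mono fun t ht => (hD_pos t ht).ne').intervalIntegrable,
    Dq_zero]
  have hDx := (hD_pos x right_mem_uIcc).ne'
  have hk0 : (k : ℝ) ≠ 0 := by positivity
  have hq' : 1 - q ≠ 0 := sub_ne_zero.2 hq1.ne'
  field_simp
  ring
end

section
/- Let k ≥ 2 be an integer and q ∈ (0,1]. Then D_q is nondecreasing on [0,1] and satisfies q ≤ D_q(x) ≤ 1 for all x ∈ [0,1]; consequently λ_q(x) ≥ 0 for all x ∈ [0,1]. -/
theorem stmt13 (k : ℕ) (hk : 2 ≤ k) (q : ℝ) (hq : q ∈ Set.Ioc (0 : ℝ) 1) :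
    MonotoneOn (Dq k q) (Set.Icc 0 1) ∧
      (∀ x ∈ Set.Icc (0 : ℝ) 1, q ≤ Dq k q x ∧ Dq k q x ≤ 1) ∧
      (∀ x ∈ Set.Icc (0 : ℝ) 1, 0 ≤ lamq k q x) := by
  obtain ⟨hq0, hq1⟩ := hq
  have hk2 : (2:ℝ) ≤ (k:ℝ) := by exact_mod_cast hk
  set c : ℝ := (k:ℝ) - 1 with hc
  have hc1 : 1 ≤ c := by simp only [hc]; linarith
  have hc0 : 0 < c := by linarith
  set α : ℝ := (k:ℝ) / c with hα
  have hα1 : 1 ≤ α := by rw [hα, le_div_iff₀ hc0]; linarith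
  have hαm : α - 1 = 1 / c := by
    rw [hα]; field_simp; rw [hc]; ring
  have hder : ∀ x : ℝ, HasDerivAt (Dq k q)
      ((1 - q) * k * (1 - (1 - x) ^ (1 / c))) x := by
    intro x
    have h1 : HasDerivAt (fun y : ℝ => 1 - y) (-1) x := by
      simpa using (hasDerivAt_id x).const_sub 1
    have h2 : HasDerivAt (fun y : ℝ => y ^ α) (α * (1 - x) ^ (α - 1)) (1 - x) :=
      Real.hasDerivAt_rpow_const (Or.inr hα1)
    have h3 : HasDerivAt (fun y : ℝ => (1 - y) ^ α) (α * (1 - x) ^ (α - 1) * (-1)) x :=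
      h2.comp x h1
    have h4 : HasDerivAt (fun y : ℝ => 1 - (k:ℝ) * y + c * (1 - (1 - y) ^ α))
        (-(k:ℝ) + c * (-(α * (1 - x) ^ (α - 1) * (-1)))) x := by
      have hkx : HasDerivAt (fun y : ℝ => 1 - (k:ℝ) * y) (-(k:ℝ)) x := by
        simpa using ((hasDerivAt_id x).const_mul (k:ℝ)).const_sub 1
      exact hkx.add ((h3.const_sub 1).const_mul c)
    have h5 := (h4.const_mul (1 - q)).const_sub 1
    have key : -((1 - q) * (-(k:ℝ) + c * (-(α * (1 - x) ^ (α - 1) * (-1)))))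
        = (1 - q) * k * (1 - (1 - x) ^ (1 / c)) := by
      rw [← hαm]
      have hcα : c * α = (k:ℝ) := by rw [hα]; field_simp
      linear_combination (-(1 - q) * (1 - x) ^ (α - 1)) * hcα
    rw [key] at h5
    exact h5
  have hmono : MonotoneOn (Dq k q) (Set.Icc 0 1) := by
    apply monotoneOn_of_deriv_nonneg (convex_Icc 0 1)
    · exact fun x _ => (hder x).continuousAt.continuousWithinAt
    · intro x _
      exact (hder x).differentiableAt.differentiableWithinAt
    · intro x hx
      rw [interior_Icc] at hx
      rw [(hder x).deriv]
      have hle : (1 - x) ^ (1 / c) ≤ 1 :=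
        Real.rpow_le_one (by linarith [hx.2]) (by linarith [hx.1]) (by positivity)
      have h1q : (0:ℝ) ≤ 1 - q := by linarith
      have hko : (0:ℝ) ≤ (k:ℝ) := by linarith
      have := mul_nonneg (mul_nonneg h1q hko) (by linarith : (0:ℝ) ≤ 1 - (1 - x) ^ (1 / c))
      linarith
  have hD0 : Dq k q 0 = q := by
    simp [Dq, Real.one_rpow]
  have hD1 : Dq k q 1 = 1 := by
    have hα0 : ((k:ℝ) / ((k:ℝ) - 1)) ≠ 0 := by
      have : (1:ℝ) ≤ (k:ℝ) / ((k:ℝ) - 1) := hα1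
      intro h; rw [h] at this; linarith
    simp [Dq, Real.zero_rpow hα0]
  refine ⟨hmono, fun x hx => ?_, fun x hx => ?_⟩
  · constructor
    · have := hmono (Set.left_mem_Icc.mpr (by norm_num)) hx hx.1
      rwa [hD0] at this
    · have := hmono hx (Set.right_mem_Icc.mpr (by norm_num)) hx.2
      rwa [hD1] at this
  · apply div_nonneg _ (sq_nonneg _)
    have hle : (1 - x) ^ (1 / ((k:ℝ) - 1)) ≤ 1 :=
      Real.rpow_le_one (by linarith [hx.2]) (by linarith [hx.1]) (by positivity)
    linarith
end

section
/- Let n, d, m, h be natural numbers. The number of subsets S of Fin n × Fin d with |S| = m such that exactly h indices i ∈ Fin n satisfy that the cardinality of {j ∈ Fin d : (i,j) ∈ S} is odd, equals C(n,h) times the coefficient of X^m in the polynomial f_-(X,d)^h · f_+(X,d)^{n-h} ∈ ℚ[X], where f_-(X,d) := ((1+X)^d - (1-X)^d)/2 and f_+(X,d) := ((1+X)^d + (1-X)^d)/2. -/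
/-!
Identify `S ⊆ Fin n × Fin d` with its family of rows `S_i ⊆ Fin d`, so that `|S| = ∑ |S_i|`.
Fixing the set `A` of odd rows, the generating function `∑ X^|S|` factors over the rows into
`∏_{i ∈ A} ∑_{T odd} X^|T| · ∏_{i ∉ A} ∑_{T even} X^|T| = f₋^|A| f₊^(n-|A|)`, the parity-filtered
binomial sums being the halved sum and difference of `(1 + X)^d` and `(1 - X)^d`.
Summing over the `C(n, h)` sets `A` of size `h` gives the count.
-/

open Polynomial

/-- `f₋(X, d) = ((1+X)^d - (1-X)^d)/2` over `ℚ`. -/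
noncomputable def fminus (d : ℕ) : Polynomial ℚ :=
  Polynomial.C (1 / 2 : ℚ) * ((1 + Polynomial.X) ^ d - (1 - Polynomial.X) ^ d)

/-- `f₊(X, d) = ((1+X)^d + (1-X)^d)/2` over `ℚ`. -/
noncomputable def fplus (d : ℕ) : Polynomial ℚ :=
  Polynomial.C (1 / 2 : ℚ) * ((1 + Polynomial.X) ^ d + (1 - Polynomial.X) ^ d)

open Finset

theorem Polynomial.coeff_sum_X_pow {R α : Type*} [Semiring R] (s : Finset α) (g : α → ℕ)
    (m : ℕ) : (∑ a ∈ s, (X : R[X]) ^ g a).coeff m = #{a ∈ s | g a = m} := by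
  simp_rw [finsetSum_coeff, coeff_X_pow, eq_comm (a := m), sum_boole]

theorem Finset.card_filter_card_eq_sum_powersetCard {α ι : Type*} [Fintype ι] [DecidableEq ι]
    (s : Finset α) (f : α → Finset ι) (h : ℕ) :
    #{a ∈ s | #(f a) = h} = ∑ A ∈ powersetCard h univ, #{a ∈ s | f a = A} := by
  rw [sum_card_fiberwise_eq_card_filter]
  simp

theorem Fintype.sum_pow_card {R : Type*} [CommSemiring R] (κ : Type*) [Fintype κ] (a : R) :
    ∑ T : Finset κ, a ^ #T = (1 + a) ^ Fintype.card κ := by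
  simpa [add_comm] using Fintype.sum_pow_mul_eq_add_pow κ a 1

section Parity

variable {R : Type*} [CommRing R] (κ : Type*) [Fintype κ]

theorem two_mul_sum_odd_card_pow_card (a : R) :
    2 * ∑ T : Finset κ with Odd #T, a ^ #T
      = (1 + a) ^ Fintype.card κ - (1 - a) ^ Fintype.card κ := by
  rw [← Fintype.sum_pow_card, sub_eq_add_neg 1 a, ← Fintype.sum_pow_card, ← sum_sub_distrib,
    mul_sum, sum_filter]
  refine sum_congr rfl fun T _ => ?_
  rcases Nat.even_or_odd #T with hT | hT
  · simp [hT.neg_pow, Nat.not_odd_iff_even.2 hT]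
  · rw [hT.neg_pow, if_pos hT]
    ring

theorem two_mul_sum_even_card_pow_card (a : R) :
    2 * ∑ T : Finset κ with Even #T, a ^ #T
      = (1 + a) ^ Fintype.card κ + (1 - a) ^ Fintype.card κ := by
  rw [← Fintype.sum_pow_card, sub_eq_add_neg 1 a, ← Fintype.sum_pow_card, ← sum_add_distrib,
    mul_sum, sum_filter]
  refine sum_congr rfl fun T _ => ?_
  rcases Nat.even_or_odd #T with hT | hT
  · rw [hT.neg_pow, if_pos hT]
    ring
  · simp [hT.neg_pow, Nat.not_even_iff_odd.2 hT]

theorem sum_odd_card_X_pow_card :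
    ∑ T : Finset κ with Odd #T, (X : ℚ[X]) ^ #T = fminus (Fintype.card κ) := by
  rw [fminus, ← two_mul_sum_odd_card_pow_card, ← mul_assoc, ← C_ofNat, ← C_mul]
  norm_num

theorem sum_even_card_X_pow_card :
    ∑ T : Finset κ with Even #T, (X : ℚ[X]) ^ #T = fplus (Fintype.card κ) := by
  rw [fplus, ← two_mul_sum_even_card_pow_card, ← mul_assoc, ← C_ofNat, ← C_mul]
  norm_num

end Parity

section Rows

variable {ι κ : Type*} [Fintype ι] [Fintype κ] [DecidableEq ι] [DecidableEq κ]

def Finset.rowsEquiv : Finset (ι × κ) ≃ (ι → Finset κ) where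
  toFun S i := {j | (i, j) ∈ S}
  invFun x := {p | p.2 ∈ x p.1}
  left_inv S := by ext; simp
  right_inv x := by ext; simp

theorem Finset.card_eq_sum_card_rowsEquiv (S : Finset (ι × κ)) :
    #S = ∑ i, #(rowsEquiv S i) := by
  simp only [rowsEquiv, Equiv.coe_fn_mk, card_filter]
  rw [← Fintype.sum_prod_type', ← card_filter, filter_univ_mem]

def Finset.oddRows (S : Finset (ι × κ)) : Finset ι := {i | Odd #(rowsEquiv S i)}

theorem Fintype.prod_ite_mem_eq_pow_mul_pow {M : Type*} [CommMonoid M] (A : Finset ι) (a b : M) :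
    ∏ i, (if i ∈ A then a else b) = a ^ #A * b ^ #Aᶜ := by
  rw [prod_ite, prod_const, prod_const, filter_mem_eq_inter, univ_inter, ← compl_filter,
    filter_mem_eq_inter, univ_inter]

theorem sum_X_pow_card_filter_oddRows_eq (A : Finset ι) :
    ∑ S : Finset (ι × κ) with S.oddRows = A, (X : ℚ[X]) ^ #S
      = fminus (Fintype.card κ) ^ #A * fplus (Fintype.card κ) ^ #Aᶜ := by
  let t (i : ι) : Finset (Finset κ) := {T | Odd #T ↔ i ∈ A}
  have hrow : ∀ i, ∑ T ∈ t i, (X : ℚ[X]) ^ #T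
      = if i ∈ A then fminus (Fintype.card κ) else fplus (Fintype.card κ) := by
    intro i
    split_ifs with hi <;> simp [t, hi, sum_odd_card_X_pow_card, sum_even_card_X_pow_card]
  rw [← Fintype.prod_ite_mem_eq_pow_mul_pow, ← prod_congr rfl fun i _ => hrow i, prod_univ_sum]
  refine sum_equiv rowsEquiv (fun S => ?_) fun S _ => ?_
  · simp [t, Finset.ext_iff, oddRows]
  · rw [prod_pow_eq_pow_sum, card_eq_sum_card_rowsEquiv]

theorem card_filter_card_eq_and_oddRows_eq (A : Finset ι) (m : ℕ) :
    (#{S : Finset (ι × κ) | #S = m ∧ S.oddRows = A} : ℚ)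
      = (fminus (Fintype.card κ) ^ #A * fplus (Fintype.card κ) ^ #Aᶜ).coeff m := by
  rw [← sum_X_pow_card_filter_oddRows_eq, coeff_sum_X_pow, filter_filter]
  simp_rw [and_comm]

end Rows

theorem stmt14 (n d m h : ℕ) :
    ((Finset.univ.filter (fun S : Finset (Fin n × Fin d) =>
        S.card = m ∧
          (Finset.univ.filter (fun i : Fin n =>
            Odd (Finset.univ.filter (fun j : Fin d => (i, j) ∈ S)).card)).card = h)).card : ℚ)
      = (n.choose h : ℚ) * ((fminus d) ^ h * (fplus d) ^ (n - h)).coeff m := by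
  change ((#{S : Finset (Fin n × Fin d) | #S = m ∧ #S.oddRows = h} : ℕ) : ℚ) = _
  rw [← filter_filter, card_filter_card_eq_sum_powersetCard]
  push_cast
  have hfiber : ∀ A ∈ powersetCard h (univ : Finset (Fin n)),
      (#{S ∈ {S : Finset (Fin n × Fin d) | #S = m} | S.oddRows = A} : ℚ)
        = ((fminus d) ^ h * (fplus d) ^ (n - h)).coeff m := by
    intro A hA
    rw [filter_filter, card_filter_card_eq_and_oddRows_eq, card_compl, Fintype.card_fin,
      Fintype.card_fin, mem_powersetCard_univ.1 hA]
  rw [sum_congr rfl hfiber, sum_const, card_powersetCard, card_univ, Fintype.card_fin,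
    nsmul_eq_mul]
end
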